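/- Let F be a field with char(F) ≠ 2, and let A₅ be the algebra on F³ with multiplication e₁·e₂ = e₂, e₁·e₃ = e₃, e₂·e₃ = e₁ + e₂ (other basis products determined by anti-commutativity). Then the derivations of A₅ are exactly the linear maps D with D(e₁) = 0, D(e₂) = 0, D(e₃) = a e₂ for some a ∈ F, and the automorphisms of A₅ are exactly the linear maps of the following two forms (for t ∈ F): g(e₁) = e₁, g(e₂) = e₂, g(e₃) = t e₂ + e₃; or g(e₁) = e₁ + e₂, g(e₂) = -e₂, g(e₃) = -e₁ + t e₂ - e₃. -/
import Mathlib


def mulA5 {F : Type*} [Field F] (x y : Fin 3 → F) : Fin 3 → F :=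
  ![(x 1 * y 2 - x 2 * y 1),
    (x 0 * y 1 - x 1 * y 0) + (x 1 * y 2 - x 2 * y 1),
    (x 0 * y 2 - x 2 * y 0)]

theorem expandD_A5 {F : Type*} [Field F] (D : (Fin 3 → F) →ₗ[F] (Fin 3 → F)) (x : Fin 3 → F) :
    D x = x 0 • D ![1,0,0] + x 1 • D ![0,1,0] + x 2 • D ![0,0,1] := by
  have hx : x = x 0 • ![(1:F),0,0] + x 1 • ![0,1,0] + x 2 • ![0,0,1] := by
    funext i; fin_cases i <;> simp
  conv_lhs => rw [hx]
  rw [map_add, map_add, map_smul, map_smul, map_smul]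

theorem expandG_A5 {F : Type*} [Field F] (g : (Fin 3 → F) ≃ₗ[F] (Fin 3 → F)) (x : Fin 3 → F) :
    g x = x 0 • g ![1,0,0] + x 1 • g ![0,1,0] + x 2 • g ![0,0,1] := by
  have hx : x = x 0 • ![(1:F),0,0] + x 1 • ![0,1,0] + x 2 • ![0,0,1] := by
    funext i; fin_cases i <;> simp
  conv_lhs => rw [hx]
  rw [map_add, map_add, map_smul, map_smul, map_smul]

theorem der_aut_A5
    (F : Type*) [Field F] (hchar : ringChar F ≠ 2) :
    (∀ D : (Fin 3 → F) →ₗ[F] (Fin 3 → F),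
      (∀ x y : Fin 3 → F, D (mulA5 x y) = mulA5 (D x) y + mulA5 x (D y)) ↔
        ∃ a : F, D ![1, 0, 0] = 0 ∧ D ![0, 1, 0] = 0 ∧ D ![0, 0, 1] = a • ![0, 1, 0]) ∧
    (∀ g : (Fin 3 → F) ≃ₗ[F] (Fin 3 → F),
      (∀ x y : Fin 3 → F, g (mulA5 x y) = mulA5 (g x) (g y)) ↔
        ((∃ t : F, g ![1, 0, 0] = ![1, 0, 0] ∧ g ![0, 1, 0] = ![0, 1, 0] ∧
            g ![0, 0, 1] = ![0, t, 1]) ∨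
         (∃ t : F, g ![1, 0, 0] = ![1, 1, 0] ∧ g ![0, 1, 0] = ![0, -1, 0] ∧
            g ![0, 0, 1] = ![-1, t, -1]))) := by
  constructor
  · intro D
    constructor
    · intro h
      have h01 := h ![1,0,0] ![0,1,0]
      have h02 := h ![1,0,0] ![0,0,1]
      have h12 := h ![0,1,0] ![0,0,1]
      rw [show mulA5 ![(1:F),0,0] ![0,1,0] = ![0,1,0] by
        funext i; fin_cases i <;> simp [mulA5]] at h01
      rw [show mulA5 ![(1:F),0,0] ![0,0,1] = ![0,0,1] by
        funext i; fin_cases i <;> simp [mulA5]] at h02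
      rw [show mulA5 ![(0:F),1,0] ![0,0,1] = ![1,1,0] by
        funext i; fin_cases i <;> simp [mulA5]] at h12
      rw [expandD_A5 D ![1,1,0]] at h12
      have e1 := congrFun h01 0
      have e2 := congrFun h01 1
      have f1 := congrFun h02 0
      have f2 := congrFun h02 1
      have f3 := congrFun h02 2
      have g1 := congrFun h12 0
      have g2 := congrFun h12 1
      have g3 := congrFun h12 2
      simp [mulA5] at e1 e2 f1 f2 f3 g1 g2 g3
      have h02' : D ![(1:F),0,0] 2 = 0 := by linear_combination f3 - e2
      have h10 : D ![(0:F),1,0] 0 = 0 := by linear_combination e1 - h02'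
      have h20 : D ![(0:F),0,1] 0 = 0 := by linear_combination f1 + f2
      have h22 : D ![(0:F),0,1] 2 = 0 := by linear_combination f2 + h20 - g2
      have h11 : D ![(0:F),1,0] 1 = 0 := by linear_combination -g1 + f3 + h10 - h22
      have h12' : D ![(0:F),1,0] 2 = 0 := by linear_combination g3 - h02' + h10
      refine ⟨D ![0,0,1] 1, ?_, ?_, ?_⟩ <;> funext i <;> fin_cases i <;>
        simp <;>
        first
          | exact f3 | exact f2 | exact h02' | exact h10 | exact h11 | exact h12'
          | exact h20 | exact h22
    · rintro ⟨a, h0, h1, h2⟩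
      intro x y
      rw [expandD_A5 D (mulA5 x y), expandD_A5 D x, expandD_A5 D y, h0, h1, h2]
      funext i
      fin_cases i <;> simp [mulA5] <;> ring
  · intro g
    constructor
    · intro h
      have h01 := h ![1,0,0] ![0,1,0]
      have h02 := h ![1,0,0] ![0,0,1]
      have h12 := h ![0,1,0] ![0,0,1]
      rw [show mulA5 ![(1:F),0,0] ![0,1,0] = ![0,1,0] by
        funext i; fin_cases i <;> simp [mulA5]] at h01
      rw [show mulA5 ![(1:F),0,0] ![0,0,1] = ![0,0,1] by
        funext i; fin_cases i <;> simp [mulA5]] at h02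
      rw [show mulA5 ![(0:F),1,0] ![0,0,1] = ![1,1,0] by
        funext i; fin_cases i <;> simp [mulA5]] at h12
      rw [expandG_A5 g ![1,1,0]] at h12
      set u : Fin 3 → F := g ![1,0,0] with hu
      set v : Fin 3 → F := g ![0,1,0] with hv
      set w : Fin 3 → F := g ![0,0,1] with hw
      have A1 := congrFun h01 0
      have A2 := congrFun h01 1
      have A3 := congrFun h01 2
      have B1 := congrFun h02 0
      have B2 := congrFun h02 1
      have B3 := congrFun h02 2
      have C1 := congrFun h12 0
      have C2 := congrFun h12 1
      have C3 := congrFun h12 2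
      simp [mulA5] at A1 A2 A3 B1 B2 B3 C1 C2 C3
      have hvne : v ≠ 0 := by
        rw [hv]
        intro hz
        have h0 : (![0,1,0] : Fin 3 → F) = 0 := g.map_eq_zero_iff.mp hz
        have := congrFun h0 1
        simp at this
      have S : 2 * (v 0) * (w 0) - (v 0) * (w 2) - (v 2) * (w 0) = 0 := by
        linear_combination (w 0 - w 2) * A1 + w 2 * A2 - w 1 * A3 +
          (v 0 - v 2) * B1 + v 2 * B2 - v 1 * B3
      by_cases hv00 : v 0 = 0
      · have fact1 : v 1 * (u 0 - 1) = 0 := by linear_combination -A2 + u 1 * hv00 + A1 - hv00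
        have fact2 : v 2 * (u 0 - 1) = 0 := by linear_combination -A3 + u 2 * hv00
        have hu0 : u 0 = 1 := by
          by_contra hne
          have hd : u 0 - 1 ≠ 0 := sub_ne_zero_of_ne hne
          have h1 : v 1 = 0 := by
            rcases mul_eq_zero.mp fact1 with h' | h'; exact h'; exact absurd h' hd
          have h2 : v 2 = 0 := by
            rcases mul_eq_zero.mp fact2 with h' | h'; exact h'; exact absurd h' hd
          exact hvne (by funext i; fin_cases i <;> simp <;> assumption)
        by_cases hw0 : w 0 = 0
        · left
          have hu2 : u 2 = -v 2 := by linear_combination C3 + w 2 * hv00 - v 2 * hw0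
          have hsum : u 1 + v 1 = 1 := by
            linear_combination C2 - C1 + hu0 + hv00 + w 1 * hv00 - v 1 * hw0
          have hv2 : v 2 = 0 := by linear_combination -A1 + v 1 * hu2 - v 2 * hsum + hv00
          have hu2' : u 2 = 0 := by linear_combination hu2 - hv2
          have hC1' : v 1 * w 2 = 1 := by linear_combination -C1 + hu0 + hv00 + w 1 * hv2
          have hu1w2 : u 1 * w 2 = 0 := by
            linear_combination -B2 - w 1 * hu0 + u 1 * hw0 + w 1 * hu2'
          have hw2ne : w 2 ≠ 0 := by intro hzz; rw [hzz, mul_zero] at hC1'; exact zero_ne_one hC1'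
          have hu1 : u 1 = 0 := by
            rcases mul_eq_zero.mp hu1w2 with h' | h'; exact h'; exact absurd h' hw2ne
          have hv1 : v 1 = 1 := by linear_combination hsum - hu1
          have hw2 : w 2 = 1 := by linear_combination hC1' - w 2 * hv1
          exact ⟨w 1, by funext i; fin_cases i <;> simp <;> assumption,
            by funext i; fin_cases i <;> simp <;> assumption,
            by funext i; fin_cases i <;> simp <;> assumption⟩
        · right
          have keyW : w 0 * (w 0 - w 2) = 0 := by
            linear_combination (w 0 - w 2) * B1 + w 2 * B2 - w 1 * B3
          have hw2w0 : w 2 = w 0 := by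
            rcases mul_eq_zero.mp keyW with h' | h'
            · exact absurd h' hw0
            · exact (sub_eq_zero.mp h').symm
          have hv2w0 : v 2 * w 0 = 0 := by linear_combination -S + (2*w 0 - w 2) * hv00
          have hv2 : v 2 = 0 := by
            rcases mul_eq_zero.mp hv2w0 with h' | h'; exact h'; exact absurd h' hw0
          have hu2v1 : u 2 * v 1 = 0 := by linear_combination A1 - hv00 + u 1 * hv2
          have hv1ne : v 1 ≠ 0 := by
            intro hzz
            exact hvne (by funext i; fin_cases i <;> simp <;> assumption)
          have hu2 : u 2 = 0 := by
            rcases mul_eq_zero.mp hu2v1 with h' | h'; exact h'; exact absurd h' hv1ne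
          have factu1 : w 0 * (u 1 - 1) = 0 := by
            linear_combination -B1 - u 1 * hw2w0 + w 1 * hu2
          have hu1 : u 1 = 1 := by
            rcases mul_eq_zero.mp factu1 with h' | h'
            · exact absurd h' hw0
            · linear_combination h'
          have hv1 : v 1 = -1 := by
            linear_combination C2 - hu1 + w 1 * hv00 - w 1 * hv2 + v 1 * hw2w0
          have hw2 : w 2 = -1 := by
            linear_combination C1 - hu0 - hv00 - w 1 * hv2 + w 2 * hv1
          have hw0val : w 0 = -1 := by linear_combination hw2 - hw2w0
          exact ⟨w 1, by funext i; fin_cases i <;> simp <;> assumption,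
            by funext i; fin_cases i <;> simp <;> assumption,
            by funext i; fin_cases i <;> simp <;> assumption⟩
      · exfalso
        have keyV : v 0 * (v 0 - v 2) = 0 := by
          linear_combination (v 0 - v 2) * A1 + v 2 * A2 - v 1 * A3
        have hv2' : v 2 = v 0 := by
          rcases mul_eq_zero.mp keyV with h' | h'
          · exact absurd h' hv00
          · exact (sub_eq_zero.mp h').symm
        have hfac : v 0 * (w 0 - w 2) = 0 := by linear_combination S + w 0 * hv2'
        have hw2w0 : w 2 = w 0 := by
          rcases mul_eq_zero.mp hfac with h' | h'
          · exact absurd h' hv00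
          · exact (sub_eq_zero.mp h').symm
        have hu2 : u 2 = -v 0 := by linear_combination C3 - hv2' + v 0 * hw2w0 - w 0 * hv2'
        have hu1 : u 1 = -v 1 := by linear_combination C2 - w 1 * hv2' + v 1 * hw2w0
        have : v 0 = 0 := by linear_combination A1 + v 2 * hu1 - v 1 * hu2 - v 1 * hv2'
        exact hv00 this
    · rintro (⟨t, h0, h1, h2⟩ | ⟨t, h0, h1, h2⟩) <;> intro x y <;>
        rw [expandG_A5 g (mulA5 x y), expandG_A5 g x, expandG_A5 g y, h0, h1, h2] <;>
        funext i <;> fin_cases i <;> simp [mulA5] <;> ring
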